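/- arXiv:2403.05144 — 3 statements merged into one kernel-verified Lean document; each statement's English description precedes it below -/
import Mathlib

section
/- Let I^{(1)},…,I^{(R)} ∈ ℝ^{N×N} be mask matrices, Λ ∈ ℝ^{N×N}, and consider one step of an explicit partitioned Runge–Kutta method with strictly lower triangular A^{(r)} ∈ ℝ^{S×S}, shared weights b and shared abscissae c applied to the system with F^{(r)}(U) = I^{(r)} Λ U. Assume internal consistency Σ_j a^{(r)}_{ij} = c_i for all i and r, together with Σ_i b_i = 1, Σ_i b_i c_i = 1/2, and Σ_{i,j} b_i a^{(r)}_{ij} c_j = 1/6 for every r = 1,…,R. Then the one-step matrix satisfies D(Δt) = I_N + Δt Λ + (Δt²/2) Λ² + (Δt³/6) Λ³ + Σ_{k=4}^{S} Δt^k C_k for some matrices C_k ∈ ℝ^{N×N}; i.e., the order conditions bᵀ𝟙 = 1, bᵀc = 1/2, bᵀA^{(r)}c = 1/6 make the partitioned scheme third-order consistent for the linear partitioned problem. -/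
/-!
Write `M_r = I^(r) Λ`, so that `Σ_r M_r = Λ`. Expanding the stages in powers of `Δt` gives
`Y_i = P_i(Δt) U`, where the coefficient `G_{k,i}` of `Δt^k` in `P_i` obeys `G_{0,i} = 1` and
`G_{k+1,i} = Σ_{j,s} a^(s)_{ij} M_s G_{k,j}`. Strict lower triangularity makes `G_{k,i}` vanish
for `k > i`, so `D(Δt) = I + Σ_{k<S} Δt^{k+1} Λ Σ_i b_i G_{k,i}`. Internal consistency gives
`G_{1,i} = c_i Λ`, and the three order conditions turn the coefficients of `Δt`, `Δt²`, `Δt³`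
into `Λ`, `Λ²/2` and `Λ³/6`.
-/
open Finset Matrix

theorem Finset.sum_range_succ_eq_add_sum_Icc_four {M : Type*} [AddCommMonoid M] {f : ℕ → M}
    {S : ℕ} (hf : ∀ k, S < k → f k = 0) :
    ∑ k ∈ range S, f (k + 1) = f 1 + f 2 + f 3 + ∑ k ∈ Icc 4 S, f k := by
  have hhead : ∑ k ∈ range S, f (k + 1) = ∑ k ∈ range (S + 3), f (k + 1) :=
    sum_subset (range_subset_range.2 (by omega)) fun k hk hkS => hf _ (by simp at hk hkS; omega)
  have htail : ∑ k ∈ Icc 4 S, f k = ∑ k ∈ Ico 4 (S + 4), f k :=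
    sum_subset (fun k hk => by simp at hk ⊢; omega) fun k hk hkS => hf _ (by simp at hk hkS; omega)
  rw [hhead, htail, range_eq_Ico, sum_Ico_add', ← sum_Ico_consecutive _ (by omega : 0 + 1 ≤ 4)
    (by omega : 4 ≤ S + 3 + 1)]
  simp [sum_Ico_succ_top, add_assoc]

namespace PartitionedRK

section CommRing

variable {𝕜 n ι : Type*} [CommRing 𝕜] [Fintype n] [DecidableEq n] [Fintype ι] {S : ℕ}
  (M : ι → Matrix n n 𝕜) (A : ι → Matrix (Fin S) (Fin S) 𝕜)

/-- The coefficient of `Δt ^ k` in the matrix that maps `U` to the stage value `Y_i`. -/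
def stageCoeff : ℕ → Fin S → Matrix n n 𝕜
  | 0 => fun _ => 1
  | k + 1 => fun i => ∑ j, ∑ s, A s i j • (M s * stageCoeff k j)

def stagePoly (Δt : 𝕜) (i : Fin S) : Matrix n n 𝕜 :=
  ∑ k ∈ range S, Δt ^ k • stageCoeff M A k i

variable {M A}

theorem stageCoeff_zero (i : Fin S) : stageCoeff M A 0 i = 1 :=
  rfl

theorem stageCoeff_succ (k : ℕ) (i : Fin S) :
    stageCoeff M A (k + 1) i = ∑ j, ∑ s, A s i j • (M s * stageCoeff M A k j) :=
  rfl

theorem stageCoeff_eq_zero (hA : ∀ r (i j : Fin S), i ≤ j → A r i j = 0) :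
    ∀ {k : ℕ} {i : Fin S}, (i : ℕ) < k → stageCoeff M A k i = 0
  | 0, _, hik => absurd hik (Nat.not_lt_zero _)
  | k + 1, i, hik => by
    refine sum_eq_zero fun j _ => sum_eq_zero fun s _ => ?_
    rcases lt_or_ge (j : ℕ) k with hjk | hkj
    · rw [stageCoeff_eq_zero hA hjk, mul_zero, smul_zero]
    · rw [hA s i j (Fin.le_def.2 (by omega)), zero_smul]

theorem stagePoly_eq (hA : ∀ r (i j : Fin S), i ≤ j → A r i j = 0) (Δt : 𝕜) (i : Fin S) :
    stagePoly M A Δt i = 1 + Δt • ∑ j, ∑ s, A s i j • (M s * stagePoly M A Δt j) := by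
  have hlast : Δt ^ S • stageCoeff M A S i = 0 := by
    rw [stageCoeff_eq_zero hA i.isLt, smul_zero]
  rw [stagePoly, ← add_zero (∑ k ∈ _, _), ← hlast, ← sum_range_succ, sum_range_succ', add_comm]
  simp only [stageCoeff_zero, stageCoeff_succ, stagePoly, pow_zero, one_smul, smul_sum, mul_sum,
    Matrix.mul_smul, smul_smul, pow_succ]
  rw [sum_comm]
  refine congrArg _ (sum_congr rfl fun j _ => ?_)
  rw [sum_comm]
  exact sum_congr rfl fun s _ => sum_congr rfl fun k _ => by ring_nf

theorem stage_eq_stagePoly_mulVec (hA : ∀ r (i j : Fin S), i ≤ j → A r i j = 0) {Δt : 𝕜}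
    {U : n → 𝕜} {K : Fin S → ι → n → 𝕜}
    (hK : ∀ i r, K i r = M r *ᵥ (U + Δt • ∑ j, ∑ s, A s i j • K j s)) (i : Fin S) :
    U + Δt • ∑ j, ∑ s, A s i j • K j s = stagePoly M A Δt i *ᵥ U := by
  induction i using WellFoundedLT.induction with
  | _ i ih =>
  have hearlier : ∑ j, ∑ s, A s i j • K j s =
      ∑ j, ∑ s, A s i j • ((M s * stagePoly M A Δt j) *ᵥ U) := by
    refine sum_congr rfl fun j _ => sum_congr rfl fun s _ => ?_
    rcases lt_or_ge j i with hji | hij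
    · rw [hK j s, ih j hji, mulVec_mulVec]
    · rw [hA s i j hij, zero_smul, zero_smul]
  rw [hearlier, stagePoly_eq hA, add_mulVec, one_mulVec, smul_mulVec]
  simp only [sum_mulVec, smul_mulVec]

theorem step_eq_mulVec (hA : ∀ r (i j : Fin S), i ≤ j → A r i j = 0) {Δt : 𝕜}
    {U : n → 𝕜} {K : Fin S → ι → n → 𝕜}
    (hK : ∀ i r, K i r = M r *ᵥ (U + Δt • ∑ j, ∑ s, A s i j • K j s)) (b : Fin S → 𝕜) :
    U + Δt • ∑ i, ∑ r, b i • K i r =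
      (1 + Δt • ((∑ r, M r) * ∑ i, b i • stagePoly M A Δt i)) *ᵥ U := by
  have hK_stage : ∀ i r, K i r = M r *ᵥ (stagePoly M A Δt i *ᵥ U) := fun i r => by
    rw [hK, stage_eq_stagePoly_mulVec hA hK]
  simp only [hK_stage, add_mulVec, one_mulVec, smul_mulVec, mul_sum, Matrix.mul_smul, sum_mul,
    sum_mulVec, mulVec_mulVec, smul_sum]

theorem smul_mul_sum_smul_stagePoly (L : Matrix n n 𝕜) (b : Fin S → 𝕜) (Δt : 𝕜) :
    Δt • (L * ∑ i, b i • stagePoly M A Δt i) =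
      ∑ k ∈ range S, Δt ^ (k + 1) • (L * ∑ i, b i • stageCoeff M A k i) := by
  simp only [stagePoly, smul_sum, mul_sum, Matrix.mul_smul, smul_smul]
  rw [sum_comm]
  exact sum_congr rfl fun k _ => sum_congr rfl fun i _ => by ring_nf

end CommRing

section Field

variable {𝕜 n ι : Type*} [Field 𝕜] [Fintype n] [DecidableEq n] [Fintype ι] {S : ℕ}
  (M : ι → Matrix n n 𝕜) (A : ι → Matrix (Fin S) (Fin S) 𝕜) {b c : Fin S → 𝕜}

theorem sum_smul_stageCoeff_zero (hb1 : ∑ i, b i = 1) : ∑ i, b i • stageCoeff M A 0 i = 1 := by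
  simp only [stageCoeff_zero]
  rw [← sum_smul, hb1, one_smul]

variable {M A}

theorem stageCoeff_one (hint : ∀ r i, ∑ j, A r i j = c i) (i : Fin S) :
    stageCoeff M A 1 i = c i • ∑ r, M r := by
  simp only [stageCoeff_succ, stageCoeff_zero, mul_one, smul_sum]
  rw [sum_comm]
  exact sum_congr rfl fun r _ => by rw [← sum_smul, hint]

theorem sum_smul_stageCoeff_one (hint : ∀ r i, ∑ j, A r i j = c i)
    (hb2 : ∑ i, b i * c i = 1 / 2) :
    ∑ i, b i • stageCoeff M A 1 i = (1 / 2 : 𝕜) • ∑ r, M r := by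
  simp only [stageCoeff_one hint, smul_smul]
  rw [← sum_smul, hb2]

theorem sum_smul_stageCoeff_two (hint : ∀ r i, ∑ j, A r i j = c i)
    (hb3 : ∀ r, ∑ i, ∑ j, b i * A r i j * c j = 1 / 6) :
    ∑ i, b i • stageCoeff M A 2 i = (1 / 6 : 𝕜) • (∑ r, M r) ^ 2 := by
  have hweight : ∀ r, ∑ i, ∑ j, b i • A r i j • c j • M r = (1 / 6 : 𝕜) • M r := fun r => by
    simp only [smul_smul, ← sum_smul, ← hb3 r, mul_assoc]
  calc ∑ i, b i • stageCoeff M A 2 i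
      = ∑ r, (∑ i, ∑ j, b i • A r i j • c j • M r) * ∑ r, M r := by
        simp only [stageCoeff_succ 1, stageCoeff_one hint, Matrix.mul_smul]
        simp only [sum_mul, smul_sum, smul_mul_assoc]
        exact sum_comm_cycle
    _ = (1 / 6 : 𝕜) • (∑ r, M r) ^ 2 := by
        simp only [hweight]
        rw [← sum_mul, ← smul_sum, sq, smul_mul_assoc]

end Field

end PartitionedRK

open PartitionedRK

theorem stmt_6_general {N R S : ℕ}
    (Imask : Fin R → Matrix (Fin N) (Fin N) ℝ)
    (hsum : ∑ r, Imask r = 1)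
    (Λ : Matrix (Fin N) (Fin N) ℝ)
    (A : Fin R → Matrix (Fin S) (Fin S) ℝ)
    (hA : ∀ (r : Fin R) (i j : Fin S), i ≤ j → A r i j = 0)
    (b c : Fin S → ℝ)
    (hint : ∀ (r : Fin R) (i : Fin S), ∑ j, A r i j = c i)
    (hb1 : ∑ i, b i = 1)
    (hb2 : ∑ i, b i * c i = 1 / 2)
    (hb3 : ∀ r : Fin R, ∑ i, ∑ j, b i * A r i j * c j = 1 / 6) :
    ∃ C : ℕ → Matrix (Fin N) (Fin N) ℝ,
      ∀ (Δt : ℝ) (U : Fin N → ℝ) (K : Fin S → Fin R → (Fin N → ℝ)),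
        (∀ (i : Fin S) (r : Fin R),
          K i r = (Imask r * Λ).mulVec (U + Δt • ∑ j, ∑ s, A s i j • K j s)) →
        U + Δt • ∑ i, ∑ r, b i • K i r =
          (1 + Δt • Λ + (Δt ^ 2 / 2) • Λ ^ 2 + (Δt ^ 3 / 6) • Λ ^ 3
            + ∑ k ∈ Finset.Icc 4 S, Δt ^ k • C k).mulVec U := by
  let M : Fin R → Matrix (Fin N) (Fin N) ℝ := fun r => Imask r * Λ
  have hM : ∑ r, M r = Λ := by rw [← sum_mul, hsum, one_mul]
  refine ⟨fun k => Λ * ∑ i, b i • stageCoeff M A (k - 1) i, fun Δt U K hK => ?_⟩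
  have hvanish : ∀ k, S < k → Δt ^ k • (Λ * ∑ i, b i • stageCoeff M A (k - 1) i) = 0 := by
    intro k hk
    rw [sum_eq_zero fun i _ => by rw [stageCoeff_eq_zero hA (by omega), smul_zero], mul_zero,
      smul_zero]
  have hsplit := Finset.sum_range_succ_eq_add_sum_Icc_four hvanish
  norm_num only [Nat.add_sub_cancel, sum_smul_stageCoeff_zero M A hb1,
    sum_smul_stageCoeff_one hint hb2, sum_smul_stageCoeff_two hint hb3, hM] at hsplit
  rw [step_eq_mulVec (M := M) hA hK, hM, smul_mul_sum_smul_stagePoly, hsplit]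
  congr 1
  simp only [pow_one, mul_one, Matrix.mul_smul, smul_smul, ← sq, ← pow_succ', ← div_eq_mul_one_div]
  abel

/-- Under internal consistency (`Σ_j a^(r)_{ij} = c_i`) and the order
conditions `Σ_i b_i = 1`, `Σ_i b_i c_i = 1/2`, `Σ_{i,j} b_i a^(r)_{ij} c_j = 1/6` (for every
`r`), the one-step matrix `D(Δt)` of an explicit partitioned Runge–Kutta method applied to
the coefficient-partitioned linear problem `F r U = I^(r) Λ U` has the form
`D(Δt) = I + Δt Λ + (Δt²/2) Λ² + (Δt³/6) Λ³ + Σ_{k=4}^S Δt^k C_k` for some matrices `C_k`: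
the scheme is third-order consistent for the linear partitioned problem. -/
theorem stmt_6 {N R S : ℕ}
    (Imask : Fin R → Matrix (Fin N) (Fin N) ℝ)
    (hdiag : ∀ r, ∃ d : Fin N → ℝ, (∀ i, d i = 0 ∨ d i = 1) ∧ Imask r = Matrix.diagonal d)
    (hsum : ∑ r, Imask r = 1)
    (Λ : Matrix (Fin N) (Fin N) ℝ)
    (A : Fin R → Matrix (Fin S) (Fin S) ℝ)
    (hA : ∀ (r : Fin R) (i j : Fin S), i ≤ j → A r i j = 0)
    (b c : Fin S → ℝ)
    (hint : ∀ (r : Fin R) (i : Fin S), ∑ j, A r i j = c i)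
    (hb1 : ∑ i, b i = 1)
    (hb2 : ∑ i, b i * c i = 1 / 2)
    (hb3 : ∀ r : Fin R, ∑ i, ∑ j, b i * A r i j * c j = 1 / 6) :
    ∃ C : ℕ → Matrix (Fin N) (Fin N) ℝ,
      ∀ (Δt : ℝ) (U : Fin N → ℝ) (K : Fin S → Fin R → (Fin N → ℝ)),
        (∀ (i : Fin S) (r : Fin R),
          K i r = (Imask r * Λ).mulVec (U + Δt • ∑ j, ∑ s, A s i j • K j s)) →
        U + Δt • ∑ i, ∑ r, b i • K i r =
          (1 + Δt • Λ + (Δt ^ 2 / 2) • Λ ^ 2 + (Δt ^ 3 / 6) • Λ ^ 3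
            + ∑ k ∈ Finset.Icc 4 S, Δt ^ k • C k).mulVec U :=
  stmt_6_general Imask hsum Λ A hA b c hint hb1 hb2 hb3
end

section
/- Let S ≥ 3 and let A ∈ ℝ^{S×S} be the classic P-ERK tableau with abscissae c (c_1 = 0) and free parameters a_i = a_{i,i−1} (3 ≤ i ≤ S), and take weights b = e_S (b_S = 1 and b_i = 0 for i < S). Then the stability polynomial of the method (A, b, c) equals P(z) = 1 + z + c_S z² + Σ_{k=3}^{S} c_{S−k+2} (Π_{j=0}^{k−3} a_{S−j}) z^k. In particular, if c_S = 1/2 then P(z) = 1 + z + z²/2 + Σ_{k=3}^{S} c_{S−k+2} (Π_{j=0}^{k−3} a_{S−j}) z^k, so the method satisfies the second-order linear consistency conditions for every choice of the free parameters a_i. -/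
/-!
Away from the first column, the row `e_Sᵀ A^m` is the single entry `a_S a_{S-1} ⋯ a_{S-m+1}` in
column `S - m`: multiplying by `A` moves it one column left through the subdiagonal entry, and
whatever lands in the first column is annihilated at the next step because the first row of `A`
is zero. As `(A𝟙)_1 = 0` and `(A𝟙)_i = c_i` for `i ≥ 2`, this gives
`bᵀA^{k-1}𝟙 = e_Sᵀ A^{k-2} (A𝟙) = c_{S-k+2} a_S ⋯ a_{S-k+3}` for `2 ≤ k ≤ S`.
-/

/-- The classic P-ERK Butcher tableau with `S` stages (1-based indices): the only possibly
nonzero entries are `a_{2,1} = c 2` and, for rows `3 ≤ i ≤ S`, `a_{i,i-1} = a i` and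
`a_{i,1} = c i - a i`. -/
def perkA (S : ℕ) (c a : ℕ → ℝ) : Matrix (Fin S) (Fin S) ℝ :=
  Matrix.of fun i j =>
    if (i : ℕ) + 1 = 2 ∧ (j : ℕ) + 1 = 1 then c 2
    else if 3 ≤ (i : ℕ) + 1 ∧ (j : ℕ) + 1 = (i : ℕ) then a ((i : ℕ) + 1)
    else if 3 ≤ (i : ℕ) + 1 ∧ (j : ℕ) + 1 = 1 then c ((i : ℕ) + 1) - a ((i : ℕ) + 1)
    else 0

/-- The stability polynomial `P(z) = 1 + Σ_{k=1}^S (bᵀ A^{k-1} 𝟙) z^k` of an explicit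
Runge–Kutta method with Butcher matrix `A` and weights `b`. -/
noncomputable def stabPoly {S : ℕ} (A : Matrix (Fin S) (Fin S) ℝ) (b : Fin S → ℝ)
    (z : ℂ) : ℂ :=
  1 + ∑ m ∈ Finset.Icc 1 S, ((∑ i, ∑ j, b i * (A ^ (m - 1)) i j : ℝ) : ℂ) * z ^ m

open Finset Matrix

section PERK

variable {S : ℕ} (c a : ℕ → ℝ)

-- Entries of `Fin S` are 0-based while `c` and `a` are indexed from 1, hence the shifts by one.

lemma perkA_apply_of_val_eq_zero {i : Fin S} (hi : (i : ℕ) = 0) (j : Fin S) :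
    perkA S c a i j = 0 := by
  simp [perkA, hi]

lemma perkA_apply_of_val_ne_zero (i : Fin S) {j : Fin S} (hj : (j : ℕ) ≠ 0) :
    perkA S c a i j = if 2 ≤ (i : ℕ) ∧ (j : ℕ) + 1 = i then a (i + 1) else 0 := by
  simp only [perkA, Matrix.of_apply]
  split_ifs <;> first | rfl | omega

lemma perkA_mulVec_one_apply (i : Fin S) :
    (perkA S c a *ᵥ 1) i = if (i : ℕ) = 0 then 0 else c (i + 1) := by
  simp only [mulVec, dotProduct, Pi.one_apply, mul_one]
  split_ifs with hi
  · exact sum_eq_zero fun j _ => perkA_apply_of_val_eq_zero c a hi j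
  have hS : 0 < S := by omega
  have hoff :
      ∀ j : Fin S, j ≠ ⟨0, hS⟩ → j ≠ ⟨i - 1, by omega⟩ → perkA S c a i j = 0 := by
    intro j hj0 hj1
    rw [perkA_apply_of_val_ne_zero c a i (by simpa [Fin.ext_iff] using hj0), if_neg]
    simp only [ne_eq, Fin.ext_iff] at hj1
    omega
  obtain hi1 | hi2 : (i : ℕ) = 1 ∨ 2 ≤ (i : ℕ) := by omega
  · rw [Fintype.sum_eq_single ⟨0, hS⟩ fun j hj0 =>
      hoff j hj0 (by simpa [Fin.ext_iff, hi1] using hj0)]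
    simp [perkA, hi1]
  · rw [Fintype.sum_eq_add ⟨0, hS⟩ ⟨i - 1, by omega⟩ (by simp [Fin.ext_iff]; omega)
      fun j hj => hoff j hj.1 hj.2]
    simp only [perkA, Matrix.of_apply, and_true]
    split_ifs <;> first | omega | ring

lemma perkA_pow_apply_of_val_ne_zero (m : ℕ) (i : Fin S) {j : Fin S} (hj : (j : ℕ) ≠ 0) :
    (perkA S c a ^ m) i j = if (j : ℕ) + m = i then ∏ t ∈ range m, a (i + 1 - t) else 0 := by
  induction m generalizing j with
  | zero => simp [one_apply, Fin.ext_iff, eq_comm]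
  | succ m ih =>
    rw [pow_succ, mul_apply]
    by_cases hjS : (j : ℕ) + 1 < S
    · have hcol :
          ∀ l : Fin S, perkA S c a l j = if l = ⟨j + 1, hjS⟩ then a (j + 2) else 0 := by
        intro l
        rw [perkA_apply_of_val_ne_zero c a l hj]
        simp only [Fin.ext_iff]
        split_ifs <;> first | omega | (congr 1; try omega)
      simp only [hcol, mul_ite, mul_zero, sum_ite_eq', mem_univ, if_true]
      rw [ih (by simp)]
      by_cases hji : (j : ℕ) + (m + 1) = i
      · rw [if_pos (by simp; omega), if_pos hji, prod_range_succ]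
        congr 2
        omega
      · rw [if_neg (by simp; omega), if_neg hji, zero_mul]
    · rw [if_neg (by omega)]
      refine sum_eq_zero fun l _ => ?_
      rw [perkA_apply_of_val_ne_zero c a l hj, if_neg (by omega), mul_zero]

lemma perkA_pow_succ_mulVec_one_apply (m : ℕ) (i : Fin S) (hm : m < i) :
    (perkA S c a ^ (m + 1) *ᵥ 1) i = c (i + 1 - m) * ∏ t ∈ range m, a (i + 1 - t) := by
  rw [pow_succ, ← mulVec_mulVec, mulVec, dotProduct,
    Fintype.sum_eq_single ⟨i - m, by omega⟩]
  · rw [perkA_pow_apply_of_val_ne_zero c a m i (by simp; omega), if_pos (by simp; omega),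
      perkA_mulVec_one_apply, if_neg (by simp; omega), mul_comm]
    congr 2
    dsimp only
    omega
  · intro l hl
    by_cases hl0 : (l : ℕ) = 0
    · rw [perkA_mulVec_one_apply, if_pos hl0, mul_zero]
    · rw [perkA_pow_apply_of_val_ne_zero c a m i hl0, if_neg, zero_mul]
      simp only [ne_eq, Fin.ext_iff] at hl
      omega

end PERK

lemma stabPoly_pi_single {S : ℕ} (A : Matrix (Fin S) (Fin S) ℝ) (i₀ : Fin S) (z : ℂ) :
    stabPoly A (Pi.single i₀ 1) z
      = 1 + ∑ m ∈ Icc 1 S, ((A ^ (m - 1) *ᵥ 1) i₀ : ℂ) * z ^ m := by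
  simp [stabPoly, Pi.single_apply, mulVec, dotProduct]

lemma stabPoly_perkA_single_last {S : ℕ} (c a : ℕ → ℝ) (hS : 1 ≤ S) (z : ℂ) :
    stabPoly (perkA S c a) (Pi.single ⟨S - 1, by omega⟩ 1) z
      = 1 + z + ∑ k ∈ Icc 2 S,
          ((c (S - k + 2) * ∏ j ∈ range (k - 2), a (S - j) : ℝ) : ℂ) * z ^ k := by
  rw [stabPoly_pi_single, ← insert_Icc_add_one_left_eq_Icc hS, sum_insert (by simp)]
  simp only [Nat.sub_self, pow_zero, one_mulVec, Pi.one_apply, Complex.ofReal_one, one_mul,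
    pow_one, add_assoc]
  congr 2
  refine sum_congr rfl fun k hk => ?_
  obtain ⟨m, rfl⟩ : ∃ m, k = m + 2 := ⟨k - 2, by simp at hk; omega⟩
  simp only [mem_Icc] at hk
  rw [show m + 2 - 1 = m + 1 by omega,
    perkA_pow_succ_mulVec_one_apply c a m _ (by simp; omega)]
  simp only [show S - 1 + 1 = S by omega, Nat.add_sub_cancel,
    show S - (m + 2) + 2 = S - m by omega]

theorem stmt_9_general (S : ℕ) (hS : 3 ≤ S) (c a : ℕ → ℝ) :
    (∀ z : ℂ, stabPoly (perkA S c a) (fun i => if (i : ℕ) + 1 = S then 1 else 0) z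
        = 1 + z + (c S : ℂ) * z ^ 2
          + ∑ k ∈ Finset.Icc 3 S,
              ((c (S - k + 2) * ∏ j ∈ Finset.range (k - 2), a (S - j) : ℝ) : ℂ) * z ^ k)
    ∧ (c S = 1 / 2 →
        ∀ z : ℂ, stabPoly (perkA S c a) (fun i => if (i : ℕ) + 1 = S then 1 else 0) z
          = 1 + z + z ^ 2 / 2
            + ∑ k ∈ Finset.Icc 3 S,
                ((c (S - k + 2) * ∏ j ∈ Finset.range (k - 2), a (S - j) : ℝ) : ℂ) * z ^ k) := by
  have hb : (fun i : Fin S => if (i : ℕ) + 1 = S then (1 : ℝ) else 0)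
      = Pi.single ⟨S - 1, by omega⟩ 1 := by
    funext i
    simp only [Pi.single_apply, Fin.ext_iff]
    congr 1
    simp only [eq_iff_iff]
    omega
  have hexpand : ∀ z : ℂ, stabPoly (perkA S c a) (fun i => if (i : ℕ) + 1 = S then 1 else 0) z
      = 1 + z + (c S : ℂ) * z ^ 2 + ∑ k ∈ Icc 3 S,
          ((c (S - k + 2) * ∏ j ∈ range (k - 2), a (S - j) : ℝ) : ℂ) * z ^ k := by
    intro z
    rw [hb, stabPoly_perkA_single_last c a (by omega), ← insert_Icc_add_one_left_eq_Icc
      (by omega : 2 ≤ S), sum_insert (by simp), Nat.sub_add_cancel (by omega : 2 ≤ S)]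
    simp [add_assoc]
  refine ⟨hexpand, fun hcS z => ?_⟩
  rw [hexpand, hcS]
  push_cast
  ring

/-- For the classic P-ERK tableau with `c 1 = 0` and weights `b = e_S`, the
stability polynomial is `P(z) = 1 + z + c_S z² + Σ_{k=3}^S c_{S-k+2} (∏_{j=0}^{k-3} a_{S-j}) z^k`;
in particular for `c_S = 1/2` the method is second-order (linearly) consistent for every
choice of the free parameters. -/
theorem stmt_9 (S : ℕ) (hS : 3 ≤ S) (c a : ℕ → ℝ) (hc1 : c 1 = 0) :
    (∀ z : ℂ, stabPoly (perkA S c a) (fun i => if (i : ℕ) + 1 = S then 1 else 0) z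
        = 1 + z + (c S : ℂ) * z ^ 2
          + ∑ k ∈ Finset.Icc 3 S,
              ((c (S - k + 2) * ∏ j ∈ Finset.range (k - 2), a (S - j) : ℝ) : ℂ) * z ^ k)
    ∧ (c S = 1 / 2 →
        ∀ z : ℂ, stabPoly (perkA S c a) (fun i => if (i : ℕ) + 1 = S then 1 else 0) z
          = 1 + z + z ^ 2 / 2
            + ∑ k ∈ Finset.Icc 3 S,
                ((c (S - k + 2) * ∏ j ∈ Finset.range (k - 2), a (S - j) : ℝ) : ℂ) * z ^ k) :=
  stmt_9_general S hS c a
end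

section
/- Let S ≥ 4 and let A ∈ ℝ^{S×S} be the classic P-ERK tableau with abscissae c (c_1 = 0) and free parameters a_i = a_{i,i−1} (3 ≤ i ≤ S), and let the weights b ∈ ℝ^S be supported on the indices {1, S−1, S} (b_i = 0 for 2 ≤ i ≤ S−2). Then for every 3 ≤ m ≤ S, the coefficient of z^m in the stability polynomial of (A, b, c) equals b_S · c_{S−m+2} · Π_{j=0}^{m−3} a_{S−j} + b_{S−1} · c_{S−m+1} · Π_{j=0}^{m−3} a_{S−1−j}, where the second summand is interpreted as 0 when m = S (its c-factor is c_1 = 0). -/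
open Finset Matrix

section

variable {S : ℕ} {c a : ℕ → ℝ}

theorem perkA_mulVec_one (hc1 : c 1 = 0) (i : Fin S) : (perkA S c a *ᵥ 1) i = c (i + 1) := by
  simp only [mulVec, dotProduct, Pi.one_apply, mul_one, perkA, Matrix.of_apply]
  obtain hi | hi | hi : (i : ℕ) = 0 ∨ (i : ℕ) = 1 ∨ 2 ≤ (i : ℕ) := by omega
  · simp [hi, hc1]
  · rw [Fintype.sum_eq_single ⟨0, by omega⟩ fun j hj => ?_]
    · simp [hi]
    · have : (j : ℕ) ≠ 0 := fun h => hj (Fin.ext h)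
      simp [hi, this]
  · rw [Fintype.sum_eq_add ⟨i - 1, by omega⟩ ⟨0, by omega⟩ (by simp [Fin.ext_iff]; omega)
      fun j hj => ?_]
    · simp [show (i : ℕ) - 1 + 1 = i by omega, show (i : ℕ) ≠ 1 by omega,
        show 1 ≠ (i : ℕ) by omega, hi]
    · simp only [ne_eq, Fin.ext_iff] at hj
      have : (j : ℕ) + 1 ≠ i := by omega
      simp [hj.2, this]

theorem perkA_apply_mul_of_apply_zero {v : ℕ → ℝ} (hv : v 0 = 0) (i j : Fin S) :
    perkA S c a i j * v j = if (j : ℕ) + 1 = i ∧ 2 ≤ (i : ℕ) then a (i + 1) * v j else 0 := by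
  simp only [perkA, Matrix.of_apply]
  split_ifs <;> simp_all

theorem perkA_mulVec {v : ℕ → ℝ} (hv : v 0 = 0) (i : Fin S) :
    (perkA S c a *ᵥ fun j => v j) i = if 2 ≤ (i : ℕ) then a (i + 1) * v (i - 1) else 0 := by
  simp only [mulVec, dotProduct, perkA_apply_mul_of_apply_zero hv]
  split_ifs with hi
  · rw [Fintype.sum_eq_single ⟨i - 1, by omega⟩
      fun j hj => if_neg fun h => hj (Fin.ext (by simp only; omega))]
    simp [hi, show (i : ℕ) - 1 + 1 = i by omega]
  · exact Fintype.sum_eq_zero _ fun j => if_neg fun h => hi h.2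

theorem perkA_pow_succ_mulVec_one (hc1 : c 1 = 0) (p : ℕ) (i : Fin S) :
    (perkA S c a ^ (p + 1) *ᵥ 1) i =
      if p ≤ (i : ℕ) then c (i + 1 - p) * ∏ j ∈ range p, a (i + 1 - j) else 0 := by
  induction p generalizing i with
  | zero => simp [perkA_mulVec_one hc1]
  | succ p ih =>
    rw [pow_succ', ← mulVec_mulVec, funext ih,
      perkA_mulVec (v := fun n => if p ≤ n then c (n + 1 - p) * ∏ j ∈ range p, a (n + 1 - j) else 0)
        (by split_ifs <;> simp_all)]
    obtain hi | hi := lt_or_ge (i : ℕ) 2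
    · rw [if_neg (by omega), eq_comm, ite_eq_right_iff]
      intro hp
      simp [show p = 0 by omega, show (i : ℕ) = 1 by omega, hc1]
    · have hsucc : (i : ℕ) - 1 + 1 = i := by omega
      simp only [if_pos hi, hsucc, mul_ite, mul_zero, prod_range_succ', Nat.add_sub_add_right,
        show p ≤ (i : ℕ) - 1 ↔ p + 1 ≤ i by omega, Nat.sub_zero]
      split_ifs
      · ring
      · rfl
end

/-- For the classic P-ERK tableau with `c 1 = 0` and weights `b`
supported on the (1-based) indices `{1, S-1, S}`, the coefficient of `z^m` (`3 ≤ m ≤ S`) of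
the stability polynomial, namely `bᵀ A^{m-1} 𝟙`, equals
`b_S c_{S-m+2} ∏_{j=0}^{m-3} a_{S-j} + b_{S-1} c_{S-m+1} ∏_{j=0}^{m-3} a_{S-1-j}`
(for `m = S` the second summand vanishes since its `c`-factor is `c 1 = 0`). -/
theorem stmt_11 (S : ℕ) (hS : 4 ≤ S) (c a : ℕ → ℝ) (hc1 : c 1 = 0)
    (b : Fin S → ℝ)
    (hb : ∀ i : Fin S, 2 ≤ (i : ℕ) + 1 → (i : ℕ) + 1 ≤ S - 2 → b i = 0) :
    ∀ m : ℕ, 3 ≤ m → m ≤ S →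
      ∑ i, ∑ j, b i * ((perkA S c a) ^ (m - 1)) i j =
        b ⟨S - 1, by omega⟩ * c (S - m + 2) * ∏ j ∈ Finset.range (m - 2), a (S - j)
        + b ⟨S - 2, by omega⟩ * c (S - m + 1) * ∏ j ∈ Finset.range (m - 2), a (S - 1 - j) := by
  intro m hm hmS
  obtain ⟨p, rfl⟩ : ∃ p, m = p + 2 := ⟨m - 2, by omega⟩
  have hrow (i : Fin S) : ∑ j, b i * (perkA S c a ^ (p + 2 - 1)) i j =
      b i * if p ≤ (i : ℕ) then c (i + 1 - p) * ∏ j ∈ range p, a (i + 1 - j) else 0 := by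
    rw [← mul_sum, ← perkA_pow_succ_mulVec_one hc1]
    simp [mulVec, dotProduct]
  simp only [hrow]
  rw [Fintype.sum_eq_add ⟨S - 1, by omega⟩ ⟨S - 2, by omega⟩ (by simp [Fin.ext_iff]; omega)
    fun i hi => ?_]
  · simp only [if_pos (show p ≤ S - 1 by omega), if_pos (show p ≤ S - 2 by omega),
      show S - 1 + 1 = S by omega, show S - 2 + 1 = S - 1 by omega, Nat.add_sub_cancel]
    rw [show S - p = S - (p + 2) + 2 by omega, show S - 1 - p = S - (p + 2) + 1 by omega]
    ring
  · simp only [ne_eq, Fin.ext_iff] at hi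
    obtain hi0 | hi0 := eq_or_ne (i : ℕ) 0
    · rw [if_neg (by omega), mul_zero]
    · rw [hb i (by omega) (by omega), zero_mul]
end
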